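/- arXiv:1712.08258 — 4 statements merged into one kernel-verified Lean document; each statement's English description precedes it below -/
import Mathlib

section
/- For every element g of the Heisenberg group H with g ≠ I and g ≠ −I, there exist complex numbers λ ≠ μ such that the eigenspaces ker(g − λ·id) and ker(g − μ·id) of g acting on ℂ⁴ both have dimension 2, their intersection is the zero subspace, their sum is all of ℂ⁴, and every eigenvector of g lies in their union. (Geometrically: the fixed-point locus in ℙ³ of the image of g in PGL₄(ℂ) is the union of two disjoint (skew) lines.) -/
open Matrix

noncomputable section

/-- The matrix `S₁`. -/
def S1m : Matrix (Fin 4) (Fin 4) ℂ := !![0,0,1,0; 0,0,0,1; 1,0,0,0; 0,1,0,0]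

/-- The matrix `S₂`. -/
def S2m : Matrix (Fin 4) (Fin 4) ℂ := !![0,1,0,0; 1,0,0,0; 0,0,0,1; 0,0,1,0]

/-- The matrix `T₁ = diag(1,1,−1,−1)`. -/
def T1m : Matrix (Fin 4) (Fin 4) ℂ := !![1,0,0,0; 0,1,0,0; 0,0,-1,0; 0,0,0,-1]

/-- The matrix `T₂ = diag(1,−1,1,−1)`. -/
def T2m : Matrix (Fin 4) (Fin 4) ℂ := !![1,0,0,0; 0,-1,0,0; 0,0,1,0; 0,0,0,-1]

lemma S1m_mul_S1m : S1m * S1m = 1 := by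
  ext i j
  fin_cases i <;> fin_cases j <;>
    simp [S1m, Matrix.mul_apply, Fin.sum_univ_four, Matrix.one_apply, Matrix.vecHead, Matrix.vecTail]

lemma S2m_mul_S2m : S2m * S2m = 1 := by
  ext i j
  fin_cases i <;> fin_cases j <;>
    simp [S2m, Matrix.mul_apply, Fin.sum_univ_four, Matrix.one_apply, Matrix.vecHead, Matrix.vecTail]

lemma T1m_mul_T1m : T1m * T1m = 1 := by
  ext i j
  fin_cases i <;> fin_cases j <;>
    simp [T1m, Matrix.mul_apply, Fin.sum_univ_four, Matrix.one_apply, Matrix.vecHead, Matrix.vecTail]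

lemma T2m_mul_T2m : T2m * T2m = 1 := by
  ext i j
  fin_cases i <;> fin_cases j <;>
    simp [T2m, Matrix.mul_apply, Fin.sum_univ_four, Matrix.one_apply, Matrix.vecHead, Matrix.vecTail]

/-- `S₁` as an element of `GL(4, ℂ)`. -/
def S1 : Matrix.GeneralLinearGroup (Fin 4) ℂ := ⟨S1m, S1m, S1m_mul_S1m, S1m_mul_S1m⟩

/-- `S₂` as an element of `GL(4, ℂ)`. -/
def S2 : Matrix.GeneralLinearGroup (Fin 4) ℂ := ⟨S2m, S2m, S2m_mul_S2m, S2m_mul_S2m⟩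

/-- `T₁` as an element of `GL(4, ℂ)`. -/
def T1 : Matrix.GeneralLinearGroup (Fin 4) ℂ := ⟨T1m, T1m, T1m_mul_T1m, T1m_mul_T1m⟩

/-- `T₂` as an element of `GL(4, ℂ)`. -/
def T2 : Matrix.GeneralLinearGroup (Fin 4) ℂ := ⟨T2m, T2m, T2m_mul_T2m, T2m_mul_T2m⟩

/-- The Heisenberg group `H`: the subgroup of `GL(4, ℂ)` generated by `S₁, S₂, T₁, T₂`. -/
def HeisenbergGroup : Subgroup (Matrix.GeneralLinearGroup (Fin 4) ℂ) :=
  Subgroup.closure {S1, S2, T1, T2}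



lemma c_s2s1 : S2m * S1m = S1m * S2m := by
  ext i j; fin_cases i <;> fin_cases j <;>
    simp [S1m, S2m, Matrix.mul_apply, Fin.sum_univ_four, Matrix.vecHead, Matrix.vecTail]
lemma c_t1s1 : T1m * S1m = -(S1m * T1m) := by
  ext i j; fin_cases i <;> fin_cases j <;>
    simp [S1m, T1m, Matrix.mul_apply, Fin.sum_univ_four, Matrix.vecHead, Matrix.vecTail]
lemma c_t1s2 : T1m * S2m = S2m * T1m := by
  ext i j; fin_cases i <;> fin_cases j <;>
    simp [S2m, T1m, Matrix.mul_apply, Fin.sum_univ_four, Matrix.vecHead, Matrix.vecTail]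
lemma c_t2s1 : T2m * S1m = S1m * T2m := by
  ext i j; fin_cases i <;> fin_cases j <;>
    simp [S1m, T2m, Matrix.mul_apply, Fin.sum_univ_four, Matrix.vecHead, Matrix.vecTail]
lemma c_t2s2 : T2m * S2m = -(S2m * T2m) := by
  ext i j; fin_cases i <;> fin_cases j <;>
    simp [S2m, T2m, Matrix.mul_apply, Fin.sum_univ_four, Matrix.vecHead, Matrix.vecTail]
lemma c_t2t1 : T2m * T1m = T1m * T2m := by
  ext i j; fin_cases i <;> fin_cases j <;>
    simp [T1m, T2m, Matrix.mul_apply, Fin.sum_univ_four, Matrix.vecHead, Matrix.vecTail]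

section
variable (X : Matrix (Fin 4) (Fin 4) ℂ)
lemma sq_s1' : S1m * (S1m * X) = X := by rw [← mul_assoc, S1m_mul_S1m, one_mul]
lemma sq_s2' : S2m * (S2m * X) = X := by rw [← mul_assoc, S2m_mul_S2m, one_mul]
lemma sq_t1' : T1m * (T1m * X) = X := by rw [← mul_assoc, T1m_mul_T1m, one_mul]
lemma sq_t2' : T2m * (T2m * X) = X := by rw [← mul_assoc, T2m_mul_T2m, one_mul]
lemma c_s2s1' : S2m * (S1m * X) = S1m * (S2m * X) := by rw [← mul_assoc, c_s2s1, mul_assoc]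
lemma c_t1s1' : T1m * (S1m * X) = -(S1m * (T1m * X)) := by
  rw [← mul_assoc, c_t1s1, neg_mul, mul_assoc]
lemma c_t1s2' : T1m * (S2m * X) = S2m * (T1m * X) := by rw [← mul_assoc, c_t1s2, mul_assoc]
lemma c_t2s1' : T2m * (S1m * X) = S1m * (T2m * X) := by rw [← mul_assoc, c_t2s1, mul_assoc]
lemma c_t2s2' : T2m * (S2m * X) = -(S2m * (T2m * X)) := by
  rw [← mul_assoc, c_t2s2, neg_mul, mul_assoc]
lemma c_t2t1' : T2m * (T1m * X) = T1m * (T2m * X) := by rw [← mul_assoc, c_t2t1, mul_assoc]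
end

/-- The basic words in the generators. -/
def Mb (a b c d : Bool) : Matrix (Fin 4) (Fin 4) ℂ :=
  (cond a S1m 1) * ((cond b S2m 1) * ((cond c T1m 1) * (cond d T2m 1)))

lemma Mb_one : Mb false false false false = 1 := by simp [Mb]

set_option maxHeartbeats 2000000 in
lemma Mb_mul (a b c d a' b' c' d' : Bool) :
    Mb a b c d * Mb a' b' c' d' = Mb (xor a a') (xor b b') (xor c c') (xor d d') ∨
    Mb a b c d * Mb a' b' c' d' = -Mb (xor a a') (xor b b') (xor c c') (xor d d') := by
  rcases a <;> rcases b <;> rcases c <;> rcases d <;>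
    rcases a' <;> rcases b' <;> rcases c' <;> rcases d' <;>
  · simp only [Mb, Bool.xor_false, Bool.xor_true, Bool.false_xor, Bool.true_xor, Bool.not_true,
      Bool.not_false, cond_true, cond_false, one_mul, mul_one, mul_assoc, mul_neg, neg_mul,
      neg_neg, S1m_mul_S1m, S2m_mul_S2m, T1m_mul_T1m, T2m_mul_T2m,
      sq_s1', sq_s2', sq_t1', sq_t2',
      c_s2s1, c_t1s1, c_t1s2, c_t2s1, c_t2s2, c_t2t1,
      c_s2s1', c_t1s1', c_t1s2', c_t2s1', c_t2s2', c_t2t1']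
    tauto

set_option maxHeartbeats 2000000 in
set_option linter.unusedTactic false in
lemma Mb_anti (a b c d : Bool) (hne : (a, b, c, d) ≠ (false, false, false, false)) :
    ∃ h : Matrix (Fin 4) (Fin 4) ℂ, h * h = 1 ∧ h * Mb a b c d = -(Mb a b c d * h) := by
  rcases a <;> rcases b <;> rcases c <;> rcases d <;>
  first
  | exact absurd rfl hne
  | (refine ⟨T1m, T1m_mul_T1m, ?_⟩
     simp only [Mb, cond_true, cond_false, one_mul, mul_one, mul_assoc, mul_neg, neg_mul,
        neg_neg, S1m_mul_S1m, S2m_mul_S2m, T1m_mul_T1m, T2m_mul_T2m,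
        sq_s1', sq_s2', sq_t1', sq_t2',
        c_s2s1, c_t1s1, c_t1s2, c_t2s1, c_t2s2, c_t2t1,
        c_s2s1', c_t1s1', c_t1s2', c_t2s1', c_t2s2', c_t2t1']
     done)
  | (refine ⟨T2m, T2m_mul_T2m, ?_⟩
     simp only [Mb, cond_true, cond_false, one_mul, mul_one, mul_assoc, mul_neg, neg_mul,
        neg_neg, S1m_mul_S1m, S2m_mul_S2m, T1m_mul_T1m, T2m_mul_T2m,
        sq_s1', sq_s2', sq_t1', sq_t2',
        c_s2s1, c_t1s1, c_t1s2, c_t2s1, c_t2s2, c_t2t1,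
        c_s2s1', c_t1s1', c_t1s2', c_t2s1', c_t2s2', c_t2t1']
     done)
  | (refine ⟨S1m, S1m_mul_S1m, ?_⟩
     simp only [Mb, cond_true, cond_false, one_mul, mul_one, mul_assoc, mul_neg, neg_mul,
        neg_neg, S1m_mul_S1m, S2m_mul_S2m, T1m_mul_T1m, T2m_mul_T2m,
        sq_s1', sq_s2', sq_t1', sq_t2',
        c_s2s1, c_t1s1, c_t1s2, c_t2s1, c_t2s2, c_t2t1,
        c_s2s1', c_t1s1', c_t1s2', c_t2s1', c_t2s2', c_t2t1']
     done)
  | (refine ⟨S2m, S2m_mul_S2m, ?_⟩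
     simp only [Mb, cond_true, cond_false, one_mul, mul_one, mul_assoc, mul_neg, neg_mul,
        neg_neg, S1m_mul_S1m, S2m_mul_S2m, T1m_mul_T1m, T2m_mul_T2m,
        sq_s1', sq_s2', sq_t1', sq_t2',
        c_s2s1, c_t1s1, c_t1s2, c_t2s1, c_t2s2, c_t2t1,
        c_s2s1', c_t1s1', c_t1s2', c_t2s1', c_t2s2', c_t2t1']
     done)

lemma mem_heisenberg_form (g : Matrix.GeneralLinearGroup (Fin 4) ℂ) (hg : g ∈ HeisenbergGroup) :
    ∃ a b c d : Bool, ((g : Matrix (Fin 4) (Fin 4) ℂ) = Mb a b c d ∨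
      (g : Matrix (Fin 4) (Fin 4) ℂ) = -Mb a b c d) := by
  refine Subgroup.closure_induction ?_ ?_ ?_ ?_ hg
  · intro x hx
    simp only [Set.mem_insert_iff, Set.mem_singleton_iff] at hx
    rcases hx with rfl | rfl | rfl | rfl
    · exact ⟨true, false, false, false, Or.inl (by simp [Mb]; rfl)⟩
    · exact ⟨false, true, false, false, Or.inl (by simp [Mb]; rfl)⟩
    · exact ⟨false, false, true, false, Or.inl (by simp [Mb]; rfl)⟩
    · exact ⟨false, false, false, true, Or.inl (by simp [Mb]; rfl)⟩
  · exact ⟨false, false, false, false, Or.inl (by simp [Mb_one])⟩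
  · rintro x y hx hy ⟨a, b, c, d, hxe⟩ ⟨a', b', c', d', hye⟩
    refine ⟨xor a a', xor b b', xor c c', xor d d', ?_⟩
    have hval : ((x * y : Matrix.GeneralLinearGroup (Fin 4) ℂ) : Matrix (Fin 4) (Fin 4) ℂ)
        = (x : Matrix (Fin 4) (Fin 4) ℂ) * (y : Matrix (Fin 4) (Fin 4) ℂ) := Units.val_mul x y
    rcases Mb_mul a b c d a' b' c' d' with hmm | hmm <;>
      rcases hxe with h | h <;> rcases hye with h' | h' <;>
        rw [hval, h, h'] <;>
        simp only [neg_mul, mul_neg, neg_neg, hmm] <;> tauto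
  · rintro x hx ⟨a, b, c, d, hxe⟩
    have hsq : (x : Matrix (Fin 4) (Fin 4) ℂ) * (x : Matrix (Fin 4) (Fin 4) ℂ) = 1 ∨
        (x : Matrix (Fin 4) (Fin 4) ℂ) * (x : Matrix (Fin 4) (Fin 4) ℂ) = -1 := by
      rcases Mb_mul a b c d a b c d with hm | hm <;> rcases hxe with h | h <;> rw [h] <;>
        simp only [neg_mul, mul_neg, neg_neg, hm, Bool.xor_self, Mb_one] <;> tauto
    refine ⟨a, b, c, d, ?_⟩
    rcases hsq with h | h
    · have hx1 : x * x = 1 := Units.ext (by rw [Units.val_mul, h, Units.val_one])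
      have : x⁻¹ = x := inv_eq_of_mul_eq_one_right hx1
      rw [this]
      exact hxe
    · have hx1 : x * (-x) = 1 := Units.ext (by
        rw [Units.val_mul, Units.val_neg, mul_neg, h, neg_neg, Units.val_one])
      have : x⁻¹ = -x := inv_eq_of_mul_eq_one_right hx1
      rw [this, Units.val_neg]
      rcases hxe with h' | h'
      · exact Or.inr (by rw [h'])
      · exact Or.inl (by rw [h', neg_neg])


lemma main_aux (A hm : Matrix (Fin 4) (Fin 4) ℂ) (lam : ℂ) (hlam0 : lam ≠ 0)
    (hA2 : A * A = (lam * lam) • 1) (hhm : hm * hm = 1) (hanti : hm * A = -(A * hm)) :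
    lam ≠ -lam ∧
      Module.finrank ℂ (Module.End.eigenspace (Matrix.mulVecLin A) lam) = 2 ∧
      Module.finrank ℂ (Module.End.eigenspace (Matrix.mulVecLin A) (-lam)) = 2 ∧
      (Module.End.eigenspace (Matrix.mulVecLin A) lam ⊓
        Module.End.eigenspace (Matrix.mulVecLin A) (-lam) = ⊥) ∧
      (Module.End.eigenspace (Matrix.mulVecLin A) lam ⊔
        Module.End.eigenspace (Matrix.mulVecLin A) (-lam) = ⊤) ∧
      ∀ (c : ℂ) (v : Fin 4 → ℂ), v ≠ 0 → Matrix.mulVec A v = c • v →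
        (v ∈ Module.End.eigenspace (Matrix.mulVecLin A) lam ∨
          v ∈ Module.End.eigenspace (Matrix.mulVecLin A) (-lam)) := by
  have hne : lam ≠ -lam := by
    intro h
    apply hlam0
    have h2 : (2 : ℂ) * lam = 0 := by linear_combination h
    simpa using mul_eq_zero.mp h2 |>.resolve_left (by norm_num)
  set f := Matrix.mulVecLin A with hf
  have hff : ∀ v : Fin 4 → ℂ, f (f v) = (lam * lam) • v := by
    intro v
    have : f (f v) = Matrix.mulVecLin (A * A) v := by
      rw [Matrix.mulVecLin_mul]; rfl
    rw [this, hA2]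
    simp [Matrix.mulVecLin_apply, Matrix.smul_mulVec]
  -- inf = bot
  have hinf : Module.End.eigenspace f lam ⊓ Module.End.eigenspace f (-lam) = ⊥ := by
    rw [Submodule.eq_bot_iff]
    intro v hv
    rw [Submodule.mem_inf, Module.End.mem_eigenspace_iff, Module.End.mem_eigenspace_iff] at hv
    obtain ⟨h1, h2⟩ := hv
    have h3 : (lam - -lam) • v = 0 := by rw [sub_smul, ← h1, ← h2, sub_self]
    rcases smul_eq_zero.mp h3 with h | h
    · exact absurd (sub_eq_zero.mp h) hne
    · exact h
  -- sup = top
  have hsup : Module.End.eigenspace f lam ⊔ Module.End.eigenspace f (-lam) = ⊤ := by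
    rw [Submodule.eq_top_iff']
    intro v
    set u := ((2 : ℂ)⁻¹) • (v + lam⁻¹ • f v) with hu
    set w := ((2 : ℂ)⁻¹) • (v - lam⁻¹ • f v) with hw
    have huw : u + w = v := by
      rw [hu, hw]
      match_scalars <;> field_simp <;> norm_num
    have hu_mem : u ∈ Module.End.eigenspace f lam := by
      rw [Module.End.mem_eigenspace_iff, hu, _root_.map_smul, map_add, _root_.map_smul, hff]
      match_scalars <;> field_simp
    have hw_mem : w ∈ Module.End.eigenspace f (-lam) := by
      rw [Module.End.mem_eigenspace_iff, hw, _root_.map_smul, map_sub, _root_.map_smul, hff]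
      match_scalars <;> field_simp
    rw [← huw]
    exact Submodule.add_mem_sup hu_mem hw_mem
  -- equal dims via hm conjugation
  have hmul2 : ∀ v : Fin 4 → ℂ, hm.mulVec (hm.mulVec v) = v := by
    intro v
    rw [Matrix.mulVec_mulVec, hhm, Matrix.one_mulVec]
  have hswap : ∀ (mu : ℂ) (v : Fin 4 → ℂ), v ∈ Module.End.eigenspace f mu →
      hm.mulVec v ∈ Module.End.eigenspace f (-mu) := by
    intro mu v hv
    rw [Module.End.mem_eigenspace_iff] at hv ⊢
    have hv' : A.mulVec v = mu • v := hv
    have h1 : f (hm.mulVec v) = (A * hm).mulVec v := by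
      simp [hf, Matrix.mulVecLin_apply, Matrix.mulVec_mulVec]
    have hAh : A * hm = -(hm * A) := by rw [hanti, neg_neg]
    rw [h1, hAh, Matrix.neg_mulVec, ← Matrix.mulVec_mulVec, hv',
      Matrix.mulVec_smul, ← neg_smul]
  -- the linear equivalence given by hm
  let e : (Fin 4 → ℂ) ≃ₗ[ℂ] (Fin 4 → ℂ) :=
    LinearEquiv.ofLinear (Matrix.mulVecLin hm) (Matrix.mulVecLin hm)
      (LinearMap.ext fun v => by simp [Matrix.mulVecLin_apply, hmul2])
      (LinearMap.ext fun v => by simp [Matrix.mulVecLin_apply, hmul2])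
  have hmap : ∀ mu : ℂ, Submodule.map (e : (Fin 4 → ℂ) ≃ₗ[ℂ] (Fin 4 → ℂ)).toLinearMap
      (Module.End.eigenspace f mu) = Module.End.eigenspace f (-mu) := by
    intro mu
    apply le_antisymm
    · rintro x ⟨y, hy, rfl⟩
      exact hswap mu y hy
    · intro x hx
      refine ⟨hm.mulVec x, by simpa using hswap (-mu) x hx, ?_⟩
      simpa [e, Matrix.mulVecLin_apply] using hmul2 x
  have hdim_eq : Module.finrank ℂ (Module.End.eigenspace f lam)
      = Module.finrank ℂ (Module.End.eigenspace f (-lam)) := by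
    rw [← hmap lam]
    exact (LinearEquiv.finrank_map_eq e _).symm
  have htot : Module.finrank ℂ (Module.End.eigenspace f lam)
      + Module.finrank ℂ (Module.End.eigenspace f (-lam)) = 4 := by
    have := Submodule.finrank_sup_add_finrank_inf_eq
      (Module.End.eigenspace f lam) (Module.End.eigenspace f (-lam))
    rw [hinf, hsup, finrank_bot, finrank_top] at this
    simpa using this.symm
  have hd1 : Module.finrank ℂ (Module.End.eigenspace f lam) = 2 := by omega
  have hd2 : Module.finrank ℂ (Module.End.eigenspace f (-lam)) = 2 := by omega
  refine ⟨hne, hd1, hd2, hinf, hsup, ?_⟩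
  intro c v hv0 hcv
  have hfv : f v = c • v := hcv
  have h4 : (c * c) • v = (lam * lam) • v := by
    rw [← hff v, hfv, _root_.map_smul, hfv, smul_smul]
  have h5 : (c * c - lam * lam) • v = 0 := by rw [sub_smul, h4, sub_self]
  have h6 : c * c = lam * lam := by
    rcases smul_eq_zero.mp h5 with h | h
    · exact sub_eq_zero.mp h
    · exact absurd h hv0
  have h7 : (c - lam) * (c + lam) = 0 := by ring_nf; linear_combination h6
  rcases mul_eq_zero.mp h7 with h | h
  · left
    rw [Module.End.mem_eigenspace_iff, hfv, sub_eq_zero.mp h]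
  · right
    rw [Module.End.mem_eigenspace_iff, hfv, show c = -lam from by linear_combination h]

/-- For every element `g` of the Heisenberg group `H` with `g ≠ I` and `g ≠ −I`, there are two
distinct eigenvalues `λ ≠ μ` whose eigenspaces are both 2-dimensional, intersect trivially,
span `ℂ⁴`, and contain every eigenvector of `g`: the fixed locus of the image of `g` in
`PGL₄(ℂ)` acting on `ℙ³` is a union of two skew lines. -/
theorem heisenberg_fixed_locus_two_skew_lines (g : Matrix.GeneralLinearGroup (Fin 4) ℂ)
    (hg : g ∈ HeisenbergGroup) (hg1 : g ≠ 1) (hg2 : g ≠ -1) :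
    ∃ lam mu : ℂ, lam ≠ mu ∧
      Module.finrank ℂ
        (Module.End.eigenspace (Matrix.mulVecLin (g : Matrix (Fin 4) (Fin 4) ℂ)) lam) = 2 ∧
      Module.finrank ℂ
        (Module.End.eigenspace (Matrix.mulVecLin (g : Matrix (Fin 4) (Fin 4) ℂ)) mu) = 2 ∧
      (Module.End.eigenspace (Matrix.mulVecLin (g : Matrix (Fin 4) (Fin 4) ℂ)) lam ⊓
        Module.End.eigenspace (Matrix.mulVecLin (g : Matrix (Fin 4) (Fin 4) ℂ)) mu = ⊥) ∧
      (Module.End.eigenspace (Matrix.mulVecLin (g : Matrix (Fin 4) (Fin 4) ℂ)) lam ⊔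
        Module.End.eigenspace (Matrix.mulVecLin (g : Matrix (Fin 4) (Fin 4) ℂ)) mu = ⊤) ∧
      ∀ (c : ℂ) (v : Fin 4 → ℂ), v ≠ 0 →
        Matrix.mulVec (g : Matrix (Fin 4) (Fin 4) ℂ) v = c • v →
        (v ∈ Module.End.eigenspace (Matrix.mulVecLin (g : Matrix (Fin 4) (Fin 4) ℂ)) lam ∨
          v ∈ Module.End.eigenspace (Matrix.mulVecLin (g : Matrix (Fin 4) (Fin 4) ℂ)) mu) := by
  obtain ⟨a, b, c, d, hxe⟩ := mem_heisenberg_form g hg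
  by_cases h0 : (a, b, c, d) = (false, false, false, false)
  · exfalso
    simp only [Prod.mk.injEq] at h0
    obtain ⟨rfl, rfl, rfl, rfl⟩ := h0
    rw [Mb_one] at hxe
    rcases hxe with h | h
    · exact hg1 (Units.ext (by rw [h, Units.val_one]))
    · exact hg2 (Units.ext (by rw [h, Units.val_neg, Units.val_one]))
  · obtain ⟨hm, hhm, hanti⟩ := Mb_anti a b c d h0
    have hanti' : hm * (g : Matrix (Fin 4) (Fin 4) ℂ)
        = -((g : Matrix (Fin 4) (Fin 4) ℂ) * hm) := by
      rcases hxe with h | h <;> rw [h] <;>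
        simp only [mul_neg, neg_mul, neg_neg, hanti]
    have hsq : (g : Matrix (Fin 4) (Fin 4) ℂ) * (g : Matrix (Fin 4) (Fin 4) ℂ) = 1 ∨
        (g : Matrix (Fin 4) (Fin 4) ℂ) * (g : Matrix (Fin 4) (Fin 4) ℂ) = -1 := by
      rcases Mb_mul a b c d a b c d with hmm | hmm <;> rcases hxe with h | h <;> rw [h] <;>
        simp only [neg_mul, mul_neg, neg_neg, hmm, Bool.xor_self, Mb_one] <;> tauto
    rcases hsq with h | h
    · obtain ⟨hne, h1, h2, h3, h4, h5⟩ := main_aux (g : Matrix (Fin 4) (Fin 4) ℂ) hm 1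
        one_ne_zero (by rw [h]; norm_num) hhm hanti'
      exact ⟨1, -1, hne, h1, h2, h3, h4, h5⟩
    · obtain ⟨hne, h1, h2, h3, h4, h5⟩ := main_aux (g : Matrix (Fin 4) (Fin 4) ℂ) hm Complex.I
        Complex.I_ne_zero (by rw [h, Complex.I_mul_I, neg_smul, one_smul]) hhm hanti'
      exact ⟨Complex.I, -Complex.I, hne, h1, h2, h3, h4, h5⟩

end
end

section
/- Let g and h be elements of the Heisenberg group H, none of them equal to I or −I, and suppose that g·h⁻¹ is also different from I and −I (i.e. g and h have distinct images in PGL₄(ℂ)). Then no 2-dimensional eigenspace of g coincides with a 2-dimensional eigenspace of h: for all complex numbers λ, μ, if ker(g − λ·id) and ker(h − μ·id) are both 2-dimensional subspaces of ℂ⁴, then they are distinct. (Geometrically: the pairs of fixed lines in ℙ³ of distinct nontrivial elements of the image of H in PGL₄(ℂ) are disjoint.) -/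
open Matrix

noncomputable section

/-! ### Commutation relations between the generators -/

lemma rel_S1_S2 : S1m * S2m = S2m * S1m := by
  ext i j
  fin_cases i <;> fin_cases j <;>
    simp [S1m, S2m, Matrix.mul_apply, Fin.sum_univ_four, Matrix.vecHead, Matrix.vecTail]

lemma rel_S1_T1 : S1m * T1m = -(T1m * S1m) := by
  ext i j
  fin_cases i <;> fin_cases j <;>
    simp [S1m, T1m, Matrix.mul_apply, Fin.sum_univ_four, Matrix.neg_apply, Matrix.vecHead,
      Matrix.vecTail]

lemma rel_S1_T2 : S1m * T2m = T2m * S1m := by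
  ext i j
  fin_cases i <;> fin_cases j <;>
    simp [S1m, T2m, Matrix.mul_apply, Fin.sum_univ_four, Matrix.vecHead, Matrix.vecTail]

lemma rel_S2_T1 : S2m * T1m = T1m * S2m := by
  ext i j
  fin_cases i <;> fin_cases j <;>
    simp [S2m, T1m, Matrix.mul_apply, Fin.sum_univ_four, Matrix.vecHead, Matrix.vecTail]

lemma rel_S2_T2 : S2m * T2m = -(T2m * S2m) := by
  ext i j
  fin_cases i <;> fin_cases j <;>
    simp [S2m, T2m, Matrix.mul_apply, Fin.sum_univ_four, Matrix.neg_apply, Matrix.vecHead,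
      Matrix.vecTail]

lemma rel_T1_T2 : T1m * T2m = T2m * T1m := by
  ext i j
  fin_cases i <;> fin_cases j <;>
    simp [T1m, T2m, Matrix.mul_apply, Fin.sum_univ_four, Matrix.vecHead, Matrix.vecTail]

/-! ### Commutation-up-to-sign subgroup -/

abbrev GL4 := Matrix.GeneralLinearGroup (Fin 4) ℂ

/-- If `a` commutes with `b` then it commutes with `b⁻¹`. -/
lemma comm_inv {a b : GL4} (h : a * b = b * a) : a * b⁻¹ = b⁻¹ * a := by
  have := congrArg (fun x => b⁻¹ * x * b⁻¹) h
  simpa [mul_assoc] using this.symm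

/-- If `a` anticommutes with `b` then it anticommutes with `b⁻¹`. -/
lemma anticomm_inv {a b : GL4} (h : a * b = -(b * a)) : a * b⁻¹ = -(b⁻¹ * a) := by
  have h2 : b⁻¹ * a = -(a * b⁻¹) := by
    have := congrArg (fun x => b⁻¹ * x * b⁻¹) h
    simpa [mul_assoc] using this
  rw [h2, neg_neg]

/-- The set of elements of `GL₄` commuting with `k` up to sign is a subgroup. -/
def commSub (k : GL4) : Subgroup GL4 where
  carrier := {g | k * g = g * k ∨ k * g = -(g * k)}
  one_mem' := Or.inl (by rw [mul_one, one_mul])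
  mul_mem' := by
    rintro a b (ha | ha) (hb | hb)
    · exact Or.inl (by rw [← mul_assoc, ha, mul_assoc, hb, mul_assoc])
    · exact Or.inr (by rw [← mul_assoc, ha, mul_assoc, hb, mul_neg, mul_assoc])
    · exact Or.inr (by rw [← mul_assoc, ha, neg_mul, mul_assoc, hb, mul_assoc])
    · exact Or.inl (by rw [← mul_assoc, ha, neg_mul, mul_assoc, hb, mul_neg, neg_neg, mul_assoc])
  inv_mem' := by
    rintro a (ha | ha)
    · exact Or.inl (comm_inv ha)
    · exact Or.inr (anticomm_inv ha)

lemma gens_comm (k : GL4) (hk : k ∈ ({S1, S2, T1, T2} : Set GL4)) {g : GL4}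
    (hg : g ∈ HeisenbergGroup) : k * g = g * k ∨ k * g = -(g * k) := by
  refine (Subgroup.closure_le (commSub k)).2 ?_ hg
  rintro x hx
  have VE : ∀ a b : GL4, (a : Matrix (Fin 4) (Fin 4) ℂ) = b → a = b := fun a b h => Units.ext h
  have VN : ∀ a b : GL4, (a : Matrix (Fin 4) (Fin 4) ℂ) = -(b : Matrix (Fin 4) (Fin 4) ℂ) →
      a = -b := fun a b h => Units.ext (by simpa using h)
  simp only [Set.mem_insert_iff, Set.mem_singleton_iff] at hk hx
  rcases hk with rfl | rfl | rfl | rfl <;> rcases hx with rfl | rfl | rfl | rfl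
  · exact Or.inl rfl
  · exact Or.inl (VE _ _ rel_S1_S2)
  · exact Or.inr (VN _ _ rel_S1_T1)
  · exact Or.inl (VE _ _ rel_S1_T2)
  · exact Or.inl (VE _ _ rel_S1_S2.symm)
  · exact Or.inl rfl
  · exact Or.inl (VE _ _ rel_S2_T1)
  · exact Or.inr (VN _ _ rel_S2_T2)
  · exact Or.inr (VN _ _ (show T1m * S1m = -(S1m * T1m) by rw [rel_S1_T1, neg_neg]))
  · exact Or.inl (VE _ _ rel_S2_T1.symm)
  · exact Or.inl rfl
  · exact Or.inl (VE _ _ rel_T1_T2)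
  · exact Or.inl (VE _ _ rel_S1_T2.symm)
  · exact Or.inr (VN _ _ (show T2m * S2m = -(S2m * T2m) by rw [rel_S2_T2, neg_neg]))
  · exact Or.inl (VE _ _ rel_T1_T2.symm)
  · exact Or.inl rfl

/-! ### Elements of `H` have real entries and determinant one -/

lemma mem_real {g : GL4} (hg : g ∈ HeisenbergGroup) :
    ((g : Matrix (Fin 4) (Fin 4) ℂ)).map (starRingEnd ℂ) = (g : Matrix (Fin 4) (Fin 4) ℂ) := by
  induction hg using Subgroup.closure_induction with
  | mem x hx =>
    simp only [Set.mem_insert_iff, Set.mem_singleton_iff] at hx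
    rcases hx with rfl | rfl | rfl | rfl <;>
    · show Matrix.map _ (starRingEnd ℂ) = _
      ext i j
      fin_cases i <;> fin_cases j <;>
        simp [S1, S2, T1, T2, S1m, S2m, T1m, T2m, Matrix.map_apply, Matrix.vecHead, Matrix.vecTail]
  | one => simp
  | mul x y hx hy ihx ihy =>
    have : ((x * y : GL4) : Matrix (Fin 4) (Fin 4) ℂ) =
        (x : Matrix (Fin 4) (Fin 4) ℂ) * (y : Matrix (Fin 4) (Fin 4) ℂ) := rfl
    rw [this, Matrix.map_mul, ihx, ihy]
  | inv x hx ihx =>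
    have h1 : (x : Matrix (Fin 4) (Fin 4) ℂ) * ((x⁻¹ : GL4) : Matrix (Fin 4) (Fin 4) ℂ) = 1 := by
      rw [← Units.val_mul, mul_inv_cancel, Units.val_one]
    have h2 : (x : Matrix (Fin 4) (Fin 4) ℂ) *
        ((x⁻¹ : GL4) : Matrix (Fin 4) (Fin 4) ℂ).map (starRingEnd ℂ) = 1 := by
      have := congrArg (fun M => M.map (starRingEnd ℂ)) h1
      simpa only [Matrix.map_mul, ihx, Matrix.map_one, map_zero, map_one] using this
    have h3 : ((x⁻¹ : GL4) : Matrix (Fin 4) (Fin 4) ℂ) * (x : Matrix (Fin 4) (Fin 4) ℂ) = 1 := by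
      rw [← Units.val_mul, inv_mul_cancel, Units.val_one]
    calc ((x⁻¹ : GL4) : Matrix (Fin 4) (Fin 4) ℂ).map (starRingEnd ℂ)
        = (((x⁻¹ : GL4) : Matrix (Fin 4) (Fin 4) ℂ) * (x : Matrix (Fin 4) (Fin 4) ℂ)) *
            ((x⁻¹ : GL4) : Matrix (Fin 4) (Fin 4) ℂ).map (starRingEnd ℂ) := by rw [h3, one_mul]
      _ = ((x⁻¹ : GL4) : Matrix (Fin 4) (Fin 4) ℂ) := by rw [Matrix.mul_assoc, h2, Matrix.mul_one]

lemma mem_det {g : GL4} (hg : g ∈ HeisenbergGroup) :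
    ((g : Matrix (Fin 4) (Fin 4) ℂ)).det = 1 := by
  induction hg using Subgroup.closure_induction with
  | mem x hx =>
    simp only [Set.mem_insert_iff, Set.mem_singleton_iff] at hx
    rcases hx with rfl | rfl | rfl | rfl
    · show S1m.det = 1
      simp [S1m, Matrix.det_succ_row_zero, Fin.sum_univ_succ, Fin.succAbove]
    · show S2m.det = 1
      simp [S2m, Matrix.det_succ_row_zero, Fin.sum_univ_succ, Fin.succAbove]
    · show T1m.det = 1
      simp [T1m, Matrix.det_succ_row_zero, Fin.sum_univ_succ, Fin.succAbove]
    · show T2m.det = 1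
      simp [T2m, Matrix.det_succ_row_zero, Fin.sum_univ_succ, Fin.succAbove]
  | one => simp
  | mul x y hx hy ihx ihy =>
    have : ((x * y : GL4) : Matrix (Fin 4) (Fin 4) ℂ) =
        (x : Matrix (Fin 4) (Fin 4) ℂ) * (y : Matrix (Fin 4) (Fin 4) ℂ) := rfl
    rw [this, Matrix.det_mul, ihx, ihy, one_mul]
  | inv x hx ihx =>
    have h1 : (x : Matrix (Fin 4) (Fin 4) ℂ) * ((x⁻¹ : GL4) : Matrix (Fin 4) (Fin 4) ℂ) = 1 := by
      rw [← Units.val_mul, mul_inv_cancel, Units.val_one]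
    have := congrArg Matrix.det h1
    rw [Matrix.det_mul, ihx, one_mul, Matrix.det_one] at this
    exact this

/-! ### Central elements of `H` -/

lemma central (M : Matrix (Fin 4) (Fin 4) ℂ)
    (h1 : S1m * M = M * S1m) (h2 : S2m * M = M * S2m)
    (h3 : T1m * M = M * T1m) (h4 : T2m * M = M * T2m) : M = M 0 0 • 1 := by
  have e1 : ∀ i j, (S1m * M) i j = (M * S1m) i j := fun i j => by rw [h1]
  have e2 : ∀ i j, (S2m * M) i j = (M * S2m) i j := fun i j => by rw [h2]
  have e3 : ∀ i j, (T1m * M) i j = (M * T1m) i j := fun i j => by rw [h3]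
  have e4 : ∀ i j, (T2m * M) i j = (M * T2m) i j := fun i j => by rw [h4]
  have k01 : M 0 1 = 0 := by have := e4 0 1; simp [Matrix.mul_apply, Fin.sum_univ_four, T2m, Matrix.vecHead, Matrix.vecTail] at this; linear_combination this/2
  have k02 : M 0 2 = 0 := by have := e3 0 2; simp [Matrix.mul_apply, Fin.sum_univ_four, T1m, Matrix.vecHead, Matrix.vecTail] at this; linear_combination this/2
  have k03 : M 0 3 = 0 := by have := e3 0 3; simp [Matrix.mul_apply, Fin.sum_univ_four, T1m, Matrix.vecHead, Matrix.vecTail] at this; linear_combination this/2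
  have k10 : M 1 0 = 0 := by have := e4 1 0; simp [Matrix.mul_apply, Fin.sum_univ_four, T2m, Matrix.vecHead, Matrix.vecTail] at this; linear_combination -this/2
  have k12 : M 1 2 = 0 := by have := e3 1 2; simp [Matrix.mul_apply, Fin.sum_univ_four, T1m, Matrix.vecHead, Matrix.vecTail] at this; linear_combination this/2
  have k13 : M 1 3 = 0 := by have := e3 1 3; simp [Matrix.mul_apply, Fin.sum_univ_four, T1m, Matrix.vecHead, Matrix.vecTail] at this; linear_combination this/2
  have k20 : M 2 0 = 0 := by have := e3 2 0; simp [Matrix.mul_apply, Fin.sum_univ_four, T1m, Matrix.vecHead, Matrix.vecTail] at this; linear_combination -this/2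
  have k21 : M 2 1 = 0 := by have := e3 2 1; simp [Matrix.mul_apply, Fin.sum_univ_four, T1m, Matrix.vecHead, Matrix.vecTail] at this; linear_combination -this/2
  have k23 : M 2 3 = 0 := by have := e4 2 3; simp [Matrix.mul_apply, Fin.sum_univ_four, T2m, Matrix.vecHead, Matrix.vecTail] at this; linear_combination this/2
  have k30 : M 3 0 = 0 := by have := e3 3 0; simp [Matrix.mul_apply, Fin.sum_univ_four, T1m, Matrix.vecHead, Matrix.vecTail] at this; linear_combination -this/2
  have k31 : M 3 1 = 0 := by have := e3 3 1; simp [Matrix.mul_apply, Fin.sum_univ_four, T1m, Matrix.vecHead, Matrix.vecTail] at this; linear_combination -this/2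
  have k32 : M 3 2 = 0 := by have := e4 3 2; simp [Matrix.mul_apply, Fin.sum_univ_four, T2m, Matrix.vecHead, Matrix.vecTail] at this; linear_combination -this/2
  have d11 : M 1 1 = M 0 0 := by have := e2 0 1; simp [Matrix.mul_apply, Fin.sum_univ_four, S2m, Matrix.vecHead, Matrix.vecTail] at this; linear_combination this
  have d22 : M 2 2 = M 0 0 := by have := e1 0 2; simp [Matrix.mul_apply, Fin.sum_univ_four, S1m, Matrix.vecHead, Matrix.vecTail] at this; linear_combination this
  have d33 : M 3 3 = M 0 0 := by have := e1 1 3; simp [Matrix.mul_apply, Fin.sum_univ_four, S1m, Matrix.vecHead, Matrix.vecTail] at this; linear_combination this + d11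
  ext i j
  fin_cases i <;> fin_cases j <;>
    simp [Matrix.one_apply, k01, k02, k03, k10, k12, k13, k20, k21, k23, k30, k31, k32,
      d11, d22, d33]

/-- A nonscalar element of `H` anticommutes with one of the generators. -/
lemma exists_anticomm {p : GL4} (hp : p ∈ HeisenbergGroup) (hp1 : p ≠ 1) (hp2 : p ≠ -1) :
    ∃ k ∈ ({S1, S2, T1, T2} : Set GL4), k * p = -(p * k) := by
  by_contra hcon
  push_neg at hcon
  have hS1 : S1 * p = p * S1 :=
    (gens_comm S1 (by simp) hp).resolve_right (hcon S1 (by simp))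
  have hS2 : S2 * p = p * S2 :=
    (gens_comm S2 (by simp) hp).resolve_right (hcon S2 (by simp))
  have hT1 : T1 * p = p * T1 :=
    (gens_comm T1 (by simp) hp).resolve_right (hcon T1 (by simp))
  have hT2 : T2 * p = p * T2 :=
    (gens_comm T2 (by simp) hp).resolve_right (hcon T2 (by simp))
  set P : Matrix (Fin 4) (Fin 4) ℂ := (p : Matrix (Fin 4) (Fin 4) ℂ) with hP
  have hc : P = P 0 0 • 1 := by
    apply central
    · exact congrArg Units.val hS1
    · exact congrArg Units.val hS2
    · exact congrArg Units.val hT1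
    · exact congrArg Units.val hT2
  set c : ℂ := P 0 0 with hc0
  -- c is real
  have hreal : (starRingEnd ℂ) c = c := by
    have := mem_real hp
    have := congrFun (congrFun this 0) 0
    simpa [Matrix.map_apply] using this
  -- c ^ 4 = 1
  have hdet : c ^ 4 = 1 := by
    have := mem_det hp
    rw [← hP, hc] at this
    simpa [Matrix.det_smul] using this
  -- hence c = 1 or c = -1
  have him : c.im = 0 := by
    have h' := congrArg Complex.im hreal
    simp [Complex.conj_im] at h'
    linarith
  have hre : c.re ^ 4 = 1 := by
    have hcre : c = (c.re : ℂ) := by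
      apply Complex.ext <;> simp [him]
    rw [hcre] at hdet
    exact_mod_cast hdet
  have : c.re = 1 ∨ c.re = -1 := by
    have hfac : (c.re - 1) * (c.re + 1) * (c.re ^ 2 + 1) = 0 := by ring_nf; nlinarith [hre]
    have hpos : c.re ^ 2 + 1 ≠ 0 := by positivity
    rcases mul_eq_zero.1 hfac with h | h
    · rcases mul_eq_zero.1 h with h | h
      · left; linarith
      · right; linarith
    · exact absurd h hpos
  have hcre : c = (c.re : ℂ) := by apply Complex.ext <;> simp [him]
  rcases this with h | h
  · apply hp1
    apply Units.ext
    show P = 1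
    rw [hc, hcre, h]
    norm_num
  · apply hp2
    apply Units.ext
    show P = ((-1 : GL4) : Matrix (Fin 4) (Fin 4) ℂ)
    rw [hc, hcre, h, Units.val_neg, Units.val_one]
    norm_num

/-- No GL element equals its own negative. -/
lemma GL_ne_neg_self (x : GL4) : x ≠ -x := by
  intro h
  have h1 : (1 : GL4) = -1 := by
    calc (1 : GL4) = x * x⁻¹ := (mul_inv_cancel x).symm
    _ = (-x) * x⁻¹ := by rw [← h]
    _ = -(x * x⁻¹) := by rw [neg_mul]
    _ = -1 := by rw [mul_inv_cancel]
  have h2 : ((1 : GL4) : Matrix (Fin 4) (Fin 4) ℂ) = ((-1 : GL4) : Matrix (Fin 4) (Fin 4) ℂ) :=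
    congrArg Units.val h1
  rw [Units.val_neg, Units.val_one] at h2
  have h3 := congrFun (congrFun h2 0) 0
  norm_num [Matrix.one_apply, Matrix.neg_apply] at h3

/-- The key eigenspace argument. -/
lemma key (G H K : Matrix (Fin 4) (Fin 4) ℂ) (hGu : IsUnit G) (hKu : IsUnit K)
    (lam mu : ℂ)
    (hanti : K * G = -(G * K)) (hcomm : K * H = H * K)
    (heq : Module.End.eigenspace G.mulVecLin lam = Module.End.eigenspace H.mulVecLin mu)
    (hrk : Module.finrank ℂ (Module.End.eigenspace G.mulVecLin lam) = 2) : False := by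
  have hbot : Module.End.eigenspace G.mulVecLin lam ≠ ⊥ := by
    intro h
    rw [h] at hrk
    simp [finrank_bot] at hrk
  obtain ⟨v, hv, hv0⟩ := Submodule.ne_bot_iff _ |>.1 hbot
  have hgv : G *ᵥ v = lam • v := by
    have := Module.End.mem_eigenspace_iff.1 hv
    simpa [Matrix.mulVecLin_apply] using this
  -- lam ≠ 0
  obtain ⟨uG, huG⟩ := hGu
  obtain ⟨uK, huK⟩ := hKu
  have hlam : lam ≠ 0 := by
    intro h
    rw [h, zero_smul] at hgv
    apply hv0
    calc v = (1 : Matrix (Fin 4) (Fin 4) ℂ) *ᵥ v := (Matrix.one_mulVec v).symm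
    _ = ((uG⁻¹ : (Matrix (Fin 4) (Fin 4) ℂ)ˣ) : Matrix (Fin 4) (Fin 4) ℂ) *ᵥ (G *ᵥ v) := by
        rw [Matrix.mulVec_mulVec, ← huG, Units.inv_mul]
    _ = 0 := by rw [hgv, Matrix.mulVec_zero]
  -- v is an eigenvector of H
  have hvH : v ∈ Module.End.eigenspace H.mulVecLin mu := heq ▸ hv
  have hhv : H *ᵥ v = mu • v := by
    have := Module.End.mem_eigenspace_iff.1 hvH
    simpa [Matrix.mulVecLin_apply] using this
  set w : Fin 4 → ℂ := K *ᵥ v with hw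
  have hwH : H *ᵥ w = mu • w := by
    rw [hw, Matrix.mulVec_mulVec, ← hcomm, ← Matrix.mulVec_mulVec, hhv, Matrix.mulVec_smul]
  have hwmem : w ∈ Module.End.eigenspace G.mulVecLin lam := by
    rw [heq]
    exact Module.End.mem_eigenspace_iff.2 (by simpa [Matrix.mulVecLin_apply] using hwH)
  have hwg : G *ᵥ w = lam • w := by
    have := Module.End.mem_eigenspace_iff.1 hwmem
    simpa [Matrix.mulVecLin_apply] using this
  have hwg' : G *ᵥ w = -(lam • w) := by
    rw [hw, Matrix.mulVec_mulVec]
    have : G * K = -(K * G) := by rw [hanti, neg_neg]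
    rw [this, Matrix.neg_mulVec, ← Matrix.mulVec_mulVec, hgv, Matrix.mulVec_smul]
  have hw0 : w = 0 := by
    have heq2 : lam • w = -(lam • w) := hwg.symm.trans hwg'
    have h2 : lam • w + lam • w = 0 := by nth_rewrite 2 [heq2]; simp
    have h3 : (2 : ℂ) • (lam • w) = 0 := by rw [two_smul]; exact h2
    rcases smul_eq_zero.1 h3 with h | h
    · norm_num at h
    · rcases smul_eq_zero.1 h with h | h
      · exact absurd h hlam
      · exact h
  apply hv0
  calc v = (1 : Matrix (Fin 4) (Fin 4) ℂ) *ᵥ v := (Matrix.one_mulVec v).symm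
  _ = ((uK⁻¹ : (Matrix (Fin 4) (Fin 4) ℂ)ˣ) : Matrix (Fin 4) (Fin 4) ℂ) *ᵥ (K *ᵥ v) := by
      rw [Matrix.mulVec_mulVec, ← huK, Units.inv_mul]
  _ = 0 := by rw [← hw, hw0, Matrix.mulVec_zero]

/-- If `g, h ∈ H` are both different from `±I` and `g·h⁻¹ ≠ ±I` (i.e. `g` and `h` have distinct
images in `PGL₄(ℂ)`), then no 2-dimensional eigenspace of `g` coincides with a 2-dimensional
eigenspace of `h`: the pairs of fixed lines in `ℙ³` of distinct nontrivial elements of the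
image of `H` in `PGL₄(ℂ)` are disjoint. -/
theorem heisenberg_fixed_lines_disjoint (g h : Matrix.GeneralLinearGroup (Fin 4) ℂ)
    (hgH : g ∈ HeisenbergGroup) (hhH : h ∈ HeisenbergGroup)
    (hg1 : g ≠ 1) (hg2 : g ≠ -1) (hh1 : h ≠ 1) (hh2 : h ≠ -1)
    (hgh1 : g * h⁻¹ ≠ 1) (hgh2 : g * h⁻¹ ≠ -1) :
    ∀ lam mu : ℂ,
      Module.finrank ℂ
        (Module.End.eigenspace (Matrix.mulVecLin (g : Matrix (Fin 4) (Fin 4) ℂ)) lam) = 2 →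
      Module.finrank ℂ
        (Module.End.eigenspace (Matrix.mulVecLin (h : Matrix (Fin 4) (Fin 4) ℂ)) mu) = 2 →
      Module.End.eigenspace (Matrix.mulVecLin (g : Matrix (Fin 4) (Fin 4) ℂ)) lam ≠
        Module.End.eigenspace (Matrix.mulVecLin (h : Matrix (Fin 4) (Fin 4) ℂ)) mu := by
  intro lam mu hrg hrh heq
  have hpH : g * h⁻¹ ∈ HeisenbergGroup := mul_mem hgH (inv_mem hhH)
  obtain ⟨K, hKgen, hKp⟩ := exists_anticomm hpH hgh1 hgh2
  have hKg := gens_comm K hKgen hgH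
  have hKh := gens_comm K hKgen hhH
  have hKu : IsUnit (K : Matrix (Fin 4) (Fin 4) ℂ) := Units.isUnit K
  have hgu : IsUnit ((g : GL4) : Matrix (Fin 4) (Fin 4) ℂ) := Units.isUnit g
  have hhu : IsUnit ((h : GL4) : Matrix (Fin 4) (Fin 4) ℂ) := Units.isUnit h
  rcases hKg with hKg | hKg <;> rcases hKh with hKh | hKh
  · -- both commute: contradiction with hKp
    have : K * (g * h⁻¹) = (g * h⁻¹) * K := by
      rw [← mul_assoc, hKg, mul_assoc, comm_inv hKh, ← mul_assoc]
    rw [this] at hKp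
    exact GL_ne_neg_self _ hKp
  · -- K commutes with g, anticommutes with h: apply key with roles swapped
    have hanti : (K : Matrix (Fin 4) (Fin 4) ℂ) * h = -((h : Matrix (Fin 4) (Fin 4) ℂ) * K) := by
      have := congrArg Units.val hKh
      simpa using this
    have hcomm : (K : Matrix (Fin 4) (Fin 4) ℂ) * g = (g : Matrix (Fin 4) (Fin 4) ℂ) * K := by
      exact congrArg Units.val hKg
    exact key _ _ _ hhu hKu mu lam hanti hcomm heq.symm hrh
  · -- K anticommutes with g, commutes with h: apply key
    have hanti : (K : Matrix (Fin 4) (Fin 4) ℂ) * g = -((g : Matrix (Fin 4) (Fin 4) ℂ) * K) := by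
      have := congrArg Units.val hKg
      simpa using this
    have hcomm : (K : Matrix (Fin 4) (Fin 4) ℂ) * h = (h : Matrix (Fin 4) (Fin 4) ℂ) * K := by
      exact congrArg Units.val hKh
    exact key _ _ _ hgu hKu lam mu hanti hcomm heq hrg
  · -- both anticommute: contradiction with hKp
    have : K * (g * h⁻¹) = (g * h⁻¹) * K := by
      rw [← mul_assoc, hKg, neg_mul, mul_assoc, anticomm_inv hKh, mul_neg, neg_neg, ← mul_assoc]
    rw [this] at hKp
    exact GL_ne_neg_self _ hKp

end
end

section
/- For every subgroup K of the Heisenberg group H with |K| = 16, there is no nonzero vector v ∈ ℂ⁴ that is a common eigenvector of all elements of K, i.e. no nonzero v such that for every g ∈ K there exists a scalar c ∈ ℂ with g·v = c·v. (Every subgroup of order 16 of H contains −I, so this states that no subgroup of order 8 of the image of H in PGL₄(ℂ) has a fixed point in ℙ³.) -/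
open Matrix

noncomputable section

/-! ### Integer models of the generators -/

set_option maxRecDepth 10000

abbrev M4 := Matrix (Fin 4) (Fin 4) ℤ

def S1z : M4 := !![0,0,1,0; 0,0,0,1; 1,0,0,0; 0,1,0,0]
def S2z : M4 := !![0,1,0,0; 1,0,0,0; 0,0,0,1; 0,0,1,0]
def T1z : M4 := !![1,0,0,0; 0,1,0,0; 0,0,-1,0; 0,0,0,-1]
def T2z : M4 := !![1,0,0,0; 0,-1,0,0; 0,0,1,0; 0,0,0,-1]

lemma q1 : S1z * S1z = 1 := by decide
lemma q2 : S2z * S2z = 1 := by decide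
lemma q3 : T1z * T1z = 1 := by decide
lemma q4 : T2z * T2z = 1 := by decide
lemma w1 : S2z * S1z = S1z * S2z := by decide
lemma w2 : T1z * S1z = -(S1z * T1z) := by decide
lemma w3 : T1z * S2z = S2z * T1z := by decide
lemma w4 : T2z * S1z = S1z * T2z := by decide
lemma w5 : T2z * S2z = -(S2z * T2z) := by decide
lemma w6 : T2z * T1z = T1z * T2z := by decide

lemma q1' (X : M4) : S1z * (S1z * X) = X := by rw [← mul_assoc, q1, one_mul]
lemma q2' (X : M4) : S2z * (S2z * X) = X := by rw [← mul_assoc, q2, one_mul]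
lemma q3' (X : M4) : T1z * (T1z * X) = X := by rw [← mul_assoc, q3, one_mul]
lemma q4' (X : M4) : T2z * (T2z * X) = X := by rw [← mul_assoc, q4, one_mul]
lemma w1' (X : M4) : S2z * (S1z * X) = S1z * (S2z * X) := by rw [← mul_assoc, w1, mul_assoc]
lemma w2' (X : M4) : T1z * (S1z * X) = -(S1z * (T1z * X)) := by
  rw [← mul_assoc, w2, neg_mul, mul_assoc]
lemma w3' (X : M4) : T1z * (S2z * X) = S2z * (T1z * X) := by rw [← mul_assoc, w3, mul_assoc]
lemma w4' (X : M4) : T2z * (S1z * X) = S1z * (T2z * X) := by rw [← mul_assoc, w4, mul_assoc]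
lemma w5' (X : M4) : T2z * (S2z * X) = -(S2z * (T2z * X)) := by
  rw [← mul_assoc, w5, neg_mul, mul_assoc]
lemma w6' (X : M4) : T2z * (T1z * X) = T1z * (T2z * X) := by rw [← mul_assoc, w6, mul_assoc]

/-! ### The 32-element index type -/

abbrev V5 := Bool × Bool × Bool × Bool × Bool

def Az (a : Bool) : M4 := cond a S1z 1
def Bz (a : Bool) : M4 := cond a S2z 1
def Cz (a : Bool) : M4 := cond a T1z 1
def Dz (a : Bool) : M4 := cond a T2z 1
def Ez (a : Bool) : M4 := cond a (-1) 1

def NF (a b c d : Bool) : M4 := Az a * (Bz b * (Cz c * Dz d))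

def fZ (x : V5) : M4 := Ez x.1 * NF x.2.1 x.2.2.1 x.2.2.2.1 x.2.2.2.2

/-- Group law on indices. -/
def mulB (x y : V5) : V5 :=
  ⟨(x.1 ^^ y.1) ^^ ((x.2.2.2.1 && y.2.1) ^^ (x.2.2.2.2 && y.2.2.1)),
   x.2.1 ^^ y.2.1, x.2.2.1 ^^ y.2.2.1, x.2.2.2.1 ^^ y.2.2.2.1, x.2.2.2.2 ^^ y.2.2.2.2⟩

def invB (x : V5) : V5 :=
  ⟨x.1 ^^ ((x.2.2.2.1 && x.2.1) ^^ (x.2.2.2.2 && x.2.2.1)),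
   x.2.1, x.2.2.1, x.2.2.2.1, x.2.2.2.2⟩

def oneB : V5 := (false, false, false, false, false)

def omegaB (x y : V5) : Bool :=
  ((x.2.2.2.1 && y.2.1) ^^ (x.2.2.2.2 && y.2.2.1)) ^^
    ((y.2.2.2.1 && x.2.1) ^^ (y.2.2.2.2 && x.2.2.1))

def negB (x : V5) : V5 := ⟨!x.1, x.2.1, x.2.2.1, x.2.2.2.1, x.2.2.2.2⟩

lemma NF_mul : ∀ a b c d a' b' c' d' : Bool,
    NF a b c d * NF a' b' c' d' =
      Ez ((c && a') ^^ (d && b')) * NF (a ^^ a') (b ^^ b') (c ^^ c') (d ^^ d') := by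
  intro a b c d a' b' c' d'
  cases a <;> cases b <;> cases c <;> cases d <;>
    cases a' <;> cases b' <;> cases c' <;> cases d' <;>
    simp [NF, Az, Bz, Cz, Dz, Ez, mul_assoc, q1, q2, q3, q4, q1', q2', q3', q4',
      w1, w2, w3, w4, w5, w6, w1', w2', w3', w4', w5', w6', neg_mul, mul_neg, neg_neg]

lemma Ez_comm (e : Bool) (m : M4) : Ez e * m = m * Ez e := by
  cases e <;> simp [Ez]

lemma Ez_mul (e e' : Bool) : Ez e * Ez e' = Ez (e ^^ e') := by
  cases e <;> cases e' <;> simp [Ez]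

lemma fZ_mul (x y : V5) : fZ x * fZ y = fZ (mulB x y) := by
  obtain ⟨e, a, b, c, d⟩ := x
  obtain ⟨e', a', b', c', d'⟩ := y
  show (Ez e * NF a b c d) * (Ez e' * NF a' b' c' d') = _
  calc (Ez e * NF a b c d) * (Ez e' * NF a' b' c' d')
      = Ez e * ((NF a b c d * Ez e') * NF a' b' c' d') := by
        rw [mul_assoc, mul_assoc]
    _ = Ez e * (Ez e' * (NF a b c d * NF a' b' c' d')) := by
        rw [← Ez_comm, mul_assoc]
    _ = Ez e * (Ez e' * (Ez ((c && a') ^^ (d && b')) *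
          NF (a ^^ a') (b ^^ b') (c ^^ c') (d ^^ d'))) := by rw [NF_mul]
    _ = fZ (mulB (e, a, b, c, d) (e', a', b', c', d')) := by
        rw [← mul_assoc, ← mul_assoc, Ez_mul, Ez_mul]
        rfl

lemma fZ_eq_one : ∀ z : V5, fZ z = 1 → z = oneB := by decide

lemma invB_mulB : ∀ x : V5, mulB (invB x) x = oneB := by decide

lemma invB_cancel : ∀ x y : V5, mulB (invB x) y = oneB → x = y := by decide

lemma fZ_one : fZ oneB = 1 := by decide

lemma fZ_inj {x y : V5} (h : fZ x = fZ y) : x = y := by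
  apply invB_cancel
  apply fZ_eq_one
  rw [← fZ_mul, ← h, fZ_mul, invB_mulB, fZ_one]

/-! ### Transfer to `GL(4, ℂ)` -/

def castM : M4 →+* Matrix (Fin 4) (Fin 4) ℂ := (Int.castRingHom ℂ).mapMatrix

lemma castM_inj {m n : M4} (h : castM m = castM n) : m = n := by
  ext i j
  have := congrFun (congrFun (congrArg (fun M : Matrix (Fin 4) (Fin 4) ℂ => (M : _)) h) i) j
  simpa [castM, Int.cast_injective.eq_iff] using this

lemma castM_S1 : castM S1z = S1m := by
  ext i j
  fin_cases i <;> fin_cases j <;>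
    norm_num [castM, S1z, S1m, Matrix.map_apply, Matrix.vecHead, Matrix.vecTail]

lemma castM_S2 : castM S2z = S2m := by
  ext i j
  fin_cases i <;> fin_cases j <;>
    norm_num [castM, S2z, S2m, Matrix.map_apply, Matrix.vecHead, Matrix.vecTail]

lemma castM_T1 : castM T1z = T1m := by
  ext i j
  fin_cases i <;> fin_cases j <;>
    norm_num [castM, T1z, T1m, Matrix.map_apply, Matrix.vecHead, Matrix.vecTail]

lemma castM_T2 : castM T2z = T2m := by
  ext i j
  fin_cases i <;> fin_cases j <;>
    norm_num [castM, T2z, T2m, Matrix.map_apply, Matrix.vecHead, Matrix.vecTail]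

/-- `-1` as an element of `GL(4, ℂ)`. -/
def uNeg : Matrix.GeneralLinearGroup (Fin 4) ℂ := ⟨-1, -1, by simp, by simp⟩

/-- The 32 elements of the Heisenberg group. -/
def uE (x : V5) : Matrix.GeneralLinearGroup (Fin 4) ℂ :=
  (cond x.1 uNeg 1) * ((cond x.2.1 S1 1) * ((cond x.2.2.1 S2 1) *
    ((cond x.2.2.2.1 T1 1) * (cond x.2.2.2.2 T2 1))))

lemma uE_val (x : V5) : (uE x : Matrix (Fin 4) (Fin 4) ℂ) = castM (fZ x) := by
  obtain ⟨e, a, b, c, d⟩ := x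
  cases e <;> cases a <;> cases b <;> cases c <;> cases d <;>
    simp [uE, fZ, NF, Az, Bz, Cz, Dz, Ez, uNeg, S1, S2, T1, T2,
      castM_S1, castM_S2, castM_T1, castM_T2, _root_.map_mul, _root_.map_one, _root_.map_neg]

lemma uE_mul (x y : V5) : uE x * uE y = uE (mulB x y) := by
  apply Units.ext
  rw [Units.val_mul, uE_val, uE_val, uE_val, ← _root_.map_mul, fZ_mul]

lemma uE_inj {x y : V5} (h : uE x = uE y) : x = y := by
  apply fZ_inj
  apply castM_inj
  rw [← uE_val, ← uE_val, h]

lemma uE_one : uE oneB = 1 := by simp [uE, oneB]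

lemma uE_neg_one : uE (true, false, false, false, false) = uNeg := by simp [uE]

lemma uE_S1 : uE (false, true, false, false, false) = S1 := by simp [uE]
lemma uE_S2 : uE (false, false, true, false, false) = S2 := by simp [uE]
lemma uE_T1 : uE (false, false, false, true, false) = T1 := by simp [uE]
lemma uE_T2 : uE (false, false, false, false, true) = T2 := by simp [uE]

lemma S1_mem : S1 ∈ HeisenbergGroup :=
  Subgroup.subset_closure (by simp)
lemma S2_mem : S2 ∈ HeisenbergGroup :=
  Subgroup.subset_closure (by simp)
lemma T1_mem : T1 ∈ HeisenbergGroup :=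
  Subgroup.subset_closure (by simp)
lemma T2_mem : T2 ∈ HeisenbergGroup :=
  Subgroup.subset_closure (by simp)

lemma uNeg_mem : uNeg ∈ HeisenbergGroup := by
  have h1 : uE (false, true, false, true, false) = S1 * T1 := by simp [uE]
  have h2 : uE (true, false, false, false, false) =
      uE (false, true, false, true, false) * uE (false, true, false, true, false) := by
    rw [uE_mul]; rfl
  rw [← uE_neg_one, h2, h1]
  exact mul_mem (mul_mem S1_mem T1_mem) (mul_mem S1_mem T1_mem)

lemma uE_mem (x : V5) : uE x ∈ HeisenbergGroup := by
  have hc : ∀ (b : Bool) (u : Matrix.GeneralLinearGroup (Fin 4) ℂ),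
      u ∈ HeisenbergGroup → cond b u 1 ∈ HeisenbergGroup := by
    intro b u hu; cases b
    · exact one_mem _
    · exact hu
  obtain ⟨e, a, b, c, d⟩ := x
  exact mul_mem (hc e uNeg uNeg_mem) (mul_mem (hc a S1 S1_mem)
    (mul_mem (hc b S2 S2_mem) (mul_mem (hc c T1 T1_mem) (hc d T2 T2_mem))))

/-- The range of `uE` as a subgroup. -/
def rangeU : Subgroup (Matrix.GeneralLinearGroup (Fin 4) ℂ) where
  carrier := Set.range uE
  one_mem' := ⟨oneB, uE_one⟩
  mul_mem' := by
    rintro _ _ ⟨x, rfl⟩ ⟨y, rfl⟩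
    exact ⟨mulB x y, (uE_mul x y).symm⟩
  inv_mem' := by
    rintro _ ⟨x, rfl⟩
    refine ⟨invB x, eq_inv_of_mul_eq_one_left ?_⟩
    rw [uE_mul, invB_mulB, uE_one]

lemma heisenberg_le_rangeU : HeisenbergGroup ≤ rangeU := by
  apply (Subgroup.closure_le _).2
  intro g hg
  simp only [Set.mem_insert_iff, Set.mem_singleton_iff] at hg
  rcases hg with rfl | rfl | rfl | rfl
  · exact ⟨_, uE_S1⟩
  · exact ⟨_, uE_S2⟩
  · exact ⟨_, uE_T1⟩
  · exact ⟨_, uE_T2⟩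

lemma card_heisenberg : Nat.card HeisenbergGroup = 32 := by
  have e : V5 ≃ HeisenbergGroup := by
    refine Equiv.ofBijective (fun x => ⟨uE x, uE_mem x⟩) ⟨?_, ?_⟩
    · intro x y h
      exact uE_inj (Subtype.ext_iff.1 h)
    · rintro ⟨g, hg⟩
      obtain ⟨x, hx⟩ := heisenberg_le_rangeU hg
      exact ⟨x, Subtype.ext hx⟩
  rw [← Nat.card_congr e]
  simp [Nat.card_eq_fintype_card]

lemma flipB : ∀ x y : V5, omegaB x y = true → mulB y x = negB (mulB x y) := by decide

lemma negB_eq_mulB : ∀ z : V5, negB z = mulB (true, false, false, false, false) z := by decide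

/-! ### Main theorem -/

/-- No subgroup `K` of the Heisenberg group `H` of order `16` has a common eigenvector on `ℂ⁴`:
no subgroup of order `8` of the image of `H` in `PGL₄(ℂ)` has a fixed point in `ℙ³`. -/
theorem heisenberg_order_sixteen_no_common_eigenvector
    (K : Subgroup (Matrix.GeneralLinearGroup (Fin 4) ℂ))
    (hK : K ≤ HeisenbergGroup) (hcard : Nat.card K = 16) :
    ¬ ∃ v : Fin 4 → ℂ, v ≠ 0 ∧ ∀ g ∈ K,
      ∃ c : ℂ, Matrix.mulVec (g : Matrix (Fin 4) (Fin 4) ℂ) v = c • v := by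
  rintro ⟨v, hv0, hev⟩
  -- `K` as a subgroup of `H` has index 2
  have hcardK' : Nat.card (K.subgroupOf HeisenbergGroup) = 16 := by
    rw [Nat.card_congr (Subgroup.subgroupOfEquivOfLe hK).toEquiv, hcard]
  have hidx : (K.subgroupOf HeisenbergGroup).index = 2 := by
    have h := Subgroup.card_mul_index (K.subgroupOf HeisenbergGroup)
    rw [hcardK', card_heisenberg] at h
    omega
  have memiff : ∀ a b : HeisenbergGroup, a * b ∈ K.subgroupOf HeisenbergGroup ↔
      (a ∈ K.subgroupOf HeisenbergGroup ↔ b ∈ K.subgroupOf HeisenbergGroup) :=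
    fun a b => Subgroup.mul_mem_iff_of_index_two hidx
  -- the membership predicate on indices
  let P : V5 → Prop := fun x => uE x ∈ K
  have Pmul : ∀ x y : V5, P (mulB x y) ↔ (P x ↔ P y) := by
    intro x y
    have h := memiff ⟨uE x, uE_mem x⟩ ⟨uE y, uE_mem y⟩
    simp only [Subgroup.mem_subgroupOf] at h
    have : ((⟨uE x, uE_mem x⟩ * ⟨uE y, uE_mem y⟩ : HeisenbergGroup) :
        Matrix.GeneralLinearGroup (Fin 4) ℂ) = uE (mulB x y) := by
      rw [← uE_mul]; rfl
    rwa [this] at h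
  -- no two elements of K anticommute
  have hnc : ∀ x y : V5, omegaB x y = true → P x → P y → False := by
    intro x y hω hx hy
    obtain ⟨cx, hcx⟩ := hev (uE x) hx
    obtain ⟨cy, hcy⟩ := hev (uE y) hy
    have hflip : mulB y x = negB (mulB x y) := flipB x y hω
    have hnegval : (uE (negB (mulB x y)) : Matrix (Fin 4) (Fin 4) ℂ) =
        -(uE (mulB x y) : Matrix (Fin 4) (Fin 4) ℂ) := by
      rw [negB_eq_mulB, ← uE_mul, uE_neg_one, Units.val_mul]
      show (-1 : Matrix (Fin 4) (Fin 4) ℂ) * _ = _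
      rw [neg_one_mul]
    have e1 : (uE (mulB x y) : Matrix (Fin 4) (Fin 4) ℂ) *ᵥ v = (cx * cy) • v := by
      rw [← uE_mul, Units.val_mul, ← Matrix.mulVec_mulVec, hcy, Matrix.mulVec_smul, hcx,
        smul_smul, mul_comm]
    have e2 : (uE (mulB y x) : Matrix (Fin 4) (Fin 4) ℂ) *ᵥ v = (cx * cy) • v := by
      rw [← uE_mul, Units.val_mul, ← Matrix.mulVec_mulVec, hcx, Matrix.mulVec_smul, hcy,
        smul_smul]
    rw [hflip, hnegval, Matrix.neg_mulVec, e1] at e2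
    -- e2 : -(cx*cy) • v = (cx*cy) • v
    have hzero : (cx * cy) • v = 0 := by
      have h2 : (2 : ℂ) • ((cx * cy) • v) = 0 := by
        rw [two_smul]
        nth_rewrite 1 [← e2]
        exact neg_add_cancel _
      rcases smul_eq_zero.1 h2 with h | h
      · norm_num at h
      · exact h
    rcases smul_eq_zero.1 hzero with h | h
    · rcases mul_eq_zero.1 h with h | h
      · apply hv0
        have hx0 : (uE x : Matrix (Fin 4) (Fin 4) ℂ) *ᵥ v = 0 := by
          rw [hcx, h, zero_smul]
        have : v = ((uE x)⁻¹ : Matrix.GeneralLinearGroup (Fin 4) ℂ).val *ᵥ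
            ((uE x : Matrix (Fin 4) (Fin 4) ℂ) *ᵥ v) := by
          rw [Matrix.mulVec_mulVec, ← Units.val_mul, inv_mul_cancel, Units.val_one,
            Matrix.one_mulVec]
        rw [this, hx0, Matrix.mulVec_zero]
      · apply hv0
        have hy0 : (uE y : Matrix (Fin 4) (Fin 4) ℂ) *ᵥ v = 0 := by
          rw [hcy, h, zero_smul]
        have : v = ((uE y)⁻¹ : Matrix.GeneralLinearGroup (Fin 4) ℂ).val *ᵥ
            ((uE y : Matrix (Fin 4) (Fin 4) ℂ) *ᵥ v) := by
          rw [Matrix.mulVec_mulVec, ← Units.val_mul, inv_mul_cancel, Units.val_one,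
            Matrix.one_mulVec]
        rw [this, hy0, Matrix.mulVec_zero]
    · exact hv0 h
  -- basis elements
  have ha := Classical.em (P (false, true, false, false, false))
  have hb := Classical.em (P (false, false, true, false, false))
  have hc := Classical.em (P (false, false, false, true, false))
  have hd := Classical.em (P (false, false, false, false, true))
  -- combination memberships via Pmul
  have Pcd : ¬P (false, false, false, true, false) → ¬P (false, false, false, false, true) →
      P (false, false, false, true, true) := fun h1 h2 =>
    (Pmul (false, false, false, true, false) (false, false, false, false, true)).2
      (iff_of_false h1 h2)
  have Pbc : ¬P (false, false, true, false, false) → ¬P (false, false, false, true, false) →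
      P (false, false, true, true, false) := fun h1 h2 =>
    (Pmul (false, false, true, false, false) (false, false, false, true, false)).2
      (iff_of_false h1 h2)
  have Pbd : ¬P (false, false, true, false, false) → ¬P (false, false, false, false, true) →
      P (false, false, true, false, true) := fun h1 h2 =>
    (Pmul (false, false, true, false, false) (false, false, false, false, true)).2
      (iff_of_false h1 h2)
  have Pad : ¬P (false, true, false, false, false) → ¬P (false, false, false, false, true) →
      P (false, true, false, false, true) := fun h1 h2 =>
    (Pmul (false, true, false, false, false) (false, false, false, false, true)).2
      (iff_of_false h1 h2)
  have Pab : ¬P (false, true, false, false, false) → ¬P (false, false, true, false, false) →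
      P (false, true, true, false, false) := fun h1 h2 =>
    (Pmul (false, true, false, false, false) (false, false, true, false, false)).2
      (iff_of_false h1 h2)
  rcases ha with ha | ha <;> rcases hb with hb | hb <;>
    rcases hc with hc | hc <;> rcases hd with hd | hd
  -- (Pa, Pb, Pc, Pd)
  · exact hnc (false,false,false,false,true) (false,false,true,false,false) (by decide) hd hb
  -- (Pa, Pb, Pc, ¬Pd)
  · exact hnc (false,false,false,true,false) (false,true,false,false,false) (by decide) hc ha
  -- (Pa, Pb, ¬Pc, Pd)
  · exact hnc (false,false,false,false,true) (false,false,true,false,false) (by decide) hd hb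
  -- (Pa, Pb, ¬Pc, ¬Pd)
  · exact hnc (false,false,false,true,true) (false,false,true,false,false) (by decide) (Pcd hc hd) hb
  -- (Pa, ¬Pb, Pc, Pd)
  · exact hnc (false,false,false,true,false) (false,true,false,false,false) (by decide) hc ha
  -- (Pa, ¬Pb, Pc, ¬Pd)
  · exact hnc (false,false,false,true,false) (false,true,false,false,false) (by decide) hc ha
  -- (Pa, ¬Pb, ¬Pc, Pd)
  · exact hnc (false,false,false,false,true) (false,false,true,true,false) (by decide) hd (Pbc hb hc)
  -- (Pa, ¬Pb, ¬Pc, ¬Pd)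
  · exact hnc (false,false,false,true,true) (false,false,true,false,true) (by decide) (Pcd hc hd) (Pbd hb hd)
  -- (¬Pa, Pb, Pc, Pd)
  · exact hnc (false,false,false,false,true) (false,false,true,false,false) (by decide) hd hb
  -- (¬Pa, Pb, Pc, ¬Pd)
  · exact hnc (false,false,false,true,false) (false,true,false,false,true) (by decide) hc (Pad ha hd)
  -- (¬Pa, Pb, ¬Pc, Pd)
  · exact hnc (false,false,false,false,true) (false,false,true,false,false) (by decide) hd hb
  -- (¬Pa, Pb, ¬Pc, ¬Pd)
  · exact hnc (false,false,false,true,true) (false,false,true,false,false) (by decide) (Pcd hc hd) hb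
  -- (¬Pa, ¬Pb, Pc, Pd)
  · exact hnc (false,false,false,false,true) (false,true,true,false,false) (by decide) hd (Pab ha hb)
  -- (¬Pa, ¬Pb, Pc, ¬Pd)
  · exact hnc (false,false,false,true,false) (false,true,false,false,true) (by decide) hc (Pad ha hd)
  -- (¬Pa, ¬Pb, ¬Pc, Pd)
  · exact hnc (false,false,false,false,true) (false,false,true,true,false) (by decide) hd (Pbc hb hc)
  -- (¬Pa, ¬Pb, ¬Pc, ¬Pd)
  · exact hnc (false,false,false,true,true) (false,false,true,false,true) (by decide) (Pcd hc hd) (Pbd hb hd)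

end
end

section
/- The group A₄ × A₄ has no subgroup of order 18. -/
/-- The alternating group `A₄` on four letters. -/
abbrev A4 : Type := alternatingGroup (Fin 4)

lemma card_A4 : Nat.card A4 = 12 := by rw [Nat.card_eq_fintype_card]; decide

lemma no_sub6 (H : Subgroup A4) : Nat.card H ≠ 6 := by
  classical
  intro h6
  have hmi := H.card_mul_index
  rw [h6, card_A4] at hmi
  have hidx : H.index = 2 := by omega
  have h9 : (Finset.univ.filter (fun x : A4 => x ^ 3 = 1)).card = 9 := by decide
  have hsub : (Finset.univ.filter (fun x : A4 => x ^ 3 = 1)) ⊆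
      Finset.univ.filter (fun x : A4 => x ∈ H) := by
    intro x hx
    simp only [Finset.mem_filter, Finset.mem_univ, true_and] at hx ⊢
    have := Subgroup.sq_mem_of_index_two hidx (x ^ 2)
    have hx4 : (x ^ 2) ^ 2 = x := by
      rw [← pow_mul]
      calc x ^ 4 = x ^ 3 * x := by group
      _ = x := by rw [hx, one_mul]
    rwa [hx4] at this
  have hle := Finset.card_le_card hsub
  have hcard : (Finset.univ.filter (fun x : A4 => x ∈ H)).card = Nat.card H := by
    rw [Nat.card_eq_fintype_card, Fintype.card_subtype]
  omega

/-- The group `A₄ × A₄` has no subgroup of order `18`. -/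
theorem A4_prod_A4_no_subgroup_order_eighteen (Γ : Subgroup (A4 × A4)) :
    Nat.card Γ ≠ 18 := by
  intro h18
  set f := (MonoidHom.snd A4 A4).comp Γ.subtype with hf
  have hker : Nat.card f.ker * f.ker.index = Nat.card Γ := f.ker.card_mul_index
  have hidx : f.ker.index = Nat.card f.range := by
    rw [Subgroup.index, Nat.card_congr (QuotientGroup.quotientKerEquivRange f).toEquiv]
  -- ker embeds in A4
  set k := (MonoidHom.fst A4 A4).comp (Γ.subtype.comp f.ker.subtype) with hk
  have hkinj : Function.Injective k := by
    intro a b hab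
    have h1 : ((a : Γ) : A4 × A4).2 = 1 := a.2
    have h2 : ((b : Γ) : A4 × A4).2 = 1 := b.2
    have ha2 : ((a : Γ) : A4 × A4).2 = ((b : Γ) : A4 × A4).2 := by rw [h1, h2]
    have : ((a : Γ) : A4 × A4) = ((b : Γ) : A4 × A4) := Prod.ext hab ha2
    exact Subtype.ext (Subtype.ext this)
  have hkcard : Nat.card f.ker = Nat.card k.range :=
    Nat.card_congr (Equiv.ofInjective k hkinj)
  have ha : Nat.card k.range ∣ 12 := by rw [← card_A4]; exact k.range.card_subgroup_dvd_card
  have hb : Nat.card f.range ∣ 12 := by rw [← card_A4]; exact f.range.card_subgroup_dvd_card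
  have hab : Nat.card k.range * Nat.card f.range = 18 := by
    rw [← hkcard, ← hidx, hker, h18]
  have h6 : Nat.card k.range = 6 ∨ Nat.card f.range = 6 := by
    have h1 : Nat.card k.range ≤ 12 := Nat.le_of_dvd (by norm_num) ha
    have h2 : Nat.card f.range ≤ 12 := Nat.le_of_dvd (by norm_num) hb
    obtain ⟨c, hc⟩ := ha
    obtain ⟨d, hd⟩ := hb
    interval_cases hA : Nat.card k.range <;> interval_cases hB : Nat.card f.range <;> omega
  rcases h6 with h | h
  · exact no_sub6 _ h
  · exact no_sub6 _ h
end
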